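/- Let B, μ, β, d, α > 0 and let G : [0,∞) → [0,∞) satisfy Assumption 2.1 with G strictly increasing, concave, G(0)=0, lim_{I→∞} G(I) = C < ∞. Let T₁, T₂, T₃ ≥ 0 be nonnegative random variables with finite moment generating expectations E(e^{-μTᵢ}) ∈ (0,1]. Define H(I) = B - (1/E(e^{-μ(T₁+T₂)})) · I · [ (μ+d+α)μ/(β G(I)) + (μ+d)E(e^{-μT₁}) + α E(e^{-μT₁})(1 - E(e^{-μT₂})E(e^{-μT₃})) ] for I > 0. If H(0⁺) := lim_{I→0⁺} H(I) > 0, then H has a unique positive root I* > 0. -/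

import Mathlib

/-!
Concavity and `G 0 = 0` make the secant slope `G I / I` strictly decreasing, so `I / G I` is
strictly increasing and `H` is strictly decreasing on `(0, ∞)`. The linear part of `H` drives
it to `-∞`, while `H (0⁺) > 0`; the intermediate value theorem gives a root, and strict
monotonicity makes it unique.
-/

open Set Filter Topology

theorem existsUnique_eq_zero_of_strictAntiOn_Ioi {f : ℝ → ℝ} {a L : ℝ}
    (hcont : ContinuousOn f (Ioi a)) (hanti : StrictAntiOn f (Ioi a))
    (hright : Tendsto f (𝓝[>] a) (𝓝 L)) (hL : 0 < L) (htop : Tendsto f atTop atBot) :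
    ∃! x, a < x ∧ f x = 0 := by
  obtain ⟨x₀, hfx₀, hx₀⟩ := ((hright.eventually (eventually_gt_nhds hL)).and
    self_mem_nhdsWithin).exists
  obtain ⟨x₁, hfx₁, hx₁⟩ := ((htop.eventually (eventually_lt_atBot 0)).and
    (eventually_gt_atTop a)).exists
  obtain ⟨r, hr, hfr⟩ :=
    isPreconnected_Ioi.intermediate_value hx₁ hx₀ hcont ⟨hfx₁.le, hfx₀.le⟩
  exact ⟨r, ⟨hr, hfr⟩, fun y ⟨hy, hfy⟩ => hanti.injOn hy hr (hfy.trans hfr.symm)⟩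

theorem StrictConcaveOn.strictAntiOn_div_self {G : ℝ → ℝ} (hG : StrictConcaveOn ℝ (Ici 0) G)
    (hG0 : G 0 = 0) : StrictAntiOn (fun x => G x / x) (Ioi 0) := by
  intro x (hx : 0 < x) y (hy : 0 < y) hxy
  simpa [hG0] using hG.secant_strict_mono self_mem_Ici hx.le hy.le hx.ne' hy.ne' hxy

theorem StrictConcaveOn.strictMonoOn_self_div {G : ℝ → ℝ} (hG : StrictConcaveOn ℝ (Ici 0) G)
    (hG0 : G 0 = 0) (hGpos : ∀ x > 0, 0 < G x) : StrictMonoOn (fun x => x / G x) (Ioi 0) := by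
  intro x (hx : 0 < x) y (hy : 0 < y) hxy
  have hslope : G y / y < G x / x := hG.strictAntiOn_div_self hG0 hx hy hxy
  have hGx := hGpos x hx
  have hGy := hGpos y hy
  simpa only [inv_div] using (inv_lt_inv₀ (by positivity) (by positivity)).2 hslope

/-- The paper's `H`, with `e = 1 / E₁₂`, `p = (μ + d + α) μ`, `b = β` and `q` the constant
remainder of the bracket. -/
noncomputable def endemicResidual (B e p b q : ℝ) (G : ℝ → ℝ) (I : ℝ) : ℝ :=
  B - e * I * (p / (b * G I) + q)

section endemicResidual

variable {B e p b q : ℝ} {G : ℝ → ℝ}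

theorem continuousOn_endemicResidual (hb : b ≠ 0) (hG : ContinuousOn G (Ioi 0))
    (hGpos : ∀ x > 0, 0 < G x) : ContinuousOn (endemicResidual B e p b q G) (Ioi 0) := by
  have hne : ∀ x ∈ Ioi (0 : ℝ), b * G x ≠ 0 := fun x hx => mul_ne_zero hb (hGpos x hx).ne'
  unfold endemicResidual
  fun_prop (disch := assumption)

theorem strictAntiOn_endemicResidual (he : 0 < e) (hp : 0 < p) (hb : 0 < b) (hq : 0 ≤ q)
    (hG : StrictMonoOn (fun x => x / G x) (Ioi 0)) :
    StrictAntiOn (endemicResidual B e p b q G) (Ioi 0) := by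
  intro x (hx : 0 < x) y (hy : 0 < y) hxy
  have hratio : x / G x < y / G y := hG hx hy hxy
  have hshape : ∀ z, endemicResidual B e p b q G z = B - e * (p / b * (z / G z) + q * z) := by
    intro z
    unfold endemicResidual
    ring
  have hbracket : p / b * (x / G x) + q * x < p / b * (y / G y) + q * y :=
    add_lt_add_of_lt_of_le (by gcongr) (by gcongr)
  rw [hshape, hshape]
  gcongr

theorem tendsto_endemicResidual_atTop (he : 0 < e) (hp : 0 ≤ p) (hb : 0 ≤ b) (hq : 0 < q)
    (hG : ∀ x > 0, 0 ≤ G x) : Tendsto (endemicResidual B e p b q G) atTop atBot := by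
  have hlinear : Tendsto (fun I => B + -(e * q) * I) atTop atBot :=
    tendsto_atBot_add_const_left _ B
      (tendsto_id.const_mul_atTop_of_neg (neg_lt_zero.2 (mul_pos he hq)))
  refine tendsto_atBot_mono' _ ((eventually_gt_atTop 0).mono fun I hI => ?_) hlinear
  have := hG I hI
  have hfrac : 0 ≤ e * I * (p / (b * G I)) := by positivity
  simp only [endemicResidual]
  linarith

end endemicResidual

theorem endemic_equilibrium_unique_root_general
    (B μ β d α : ℝ) (hμ : 0 < μ) (hβ : 0 < β)
    (hd : 0 < d) (hα : 0 < α)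
    (G : ℝ → ℝ)
    (hconc : StrictConcaveOn ℝ (Set.Ici (0:ℝ)) G)
    (hG0 : G 0 = 0)
    (hGpos : ∀ I > (0:ℝ), 0 < G I)
    -- expectations E(e^{-μT₁}), E(e^{-μT₂}), E(e^{-μT₃}), E(e^{-μ(T₁+T₂)})
    (E₁ E₂ E₃ E₁₂ : ℝ)
    (hE₁ : 0 < E₁ ∧ E₁ ≤ 1) (hE₂ : 0 < E₂ ∧ E₂ ≤ 1)
    (hE₃ : 0 < E₃ ∧ E₃ ≤ 1) (hE₁₂ : 0 < E₁₂ ∧ E₁₂ ≤ 1)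
    (H : ℝ → ℝ)
    (hH : ∀ I > (0:ℝ),
      H I = B - (1 / E₁₂) * I *
        ((μ + d + α) * μ / (β * G I) + (μ + d) * E₁ +
          α * E₁ * (1 - E₂ * E₃)))
    (L : ℝ)
    (hHlim : Filter.Tendsto H (nhdsWithin 0 (Set.Ioi 0)) (nhds L))
    (hL : 0 < L) :
    ∃! Istar : ℝ, 0 < Istar ∧ H Istar = 0 := by
  obtain ⟨hE₁, -⟩ := hE₁
  set q := (μ + d) * E₁ + α * E₁ * (1 - E₂ * E₃)
  have hq : 0 < q := by
    have hE₂₃ : E₂ * E₃ ≤ 1 := mul_le_one₀ hE₂.2 hE₃.1.le hE₃.2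
    exact add_pos_of_pos_of_nonneg (by positivity) (mul_nonneg (by positivity) (by linarith))
  have hHeq : EqOn H (endemicResidual B (1 / E₁₂) ((μ + d + α) * μ) β q G) (Ioi 0) :=
    fun I hI => by rw [hH I hI, endemicResidual, add_assoc]
  have hGcont : ContinuousOn G (Ioi 0) :=
    (hconc.concaveOn.subset Ioi_subset_Ici_self (convex_Ioi 0)).continuousOn isOpen_Ioi
  have he : 0 < 1 / E₁₂ := one_div_pos.2 hE₁₂.1
  have hGnonneg : ∀ x > 0, 0 ≤ G x := fun x hx => (hGpos x hx).le
  exact existsUnique_eq_zero_of_strictAntiOn_Ioi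
    ((continuousOn_endemicResidual hβ.ne' hGcont hGpos).congr hHeq)
    ((strictAntiOn_endemicResidual he (by positivity) hβ hq.le
      (hconc.strictMonoOn_self_div hG0 hGpos)).congr hHeq.symm)
    hHlim hL
    ((tendsto_endemicResidual_atTop he (by positivity) hβ.le hq hGnonneg).congr'
      ((eventually_gt_atTop 0).mono fun I hI => (hHeq hI).symm))

theorem endemic_equilibrium_unique_root
    (B μ β d α C : ℝ) (hB : 0 < B) (hμ : 0 < μ) (hβ : 0 < β)
    (hd : 0 < d) (hα : 0 < α)
    (G : ℝ → ℝ)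
    (hmono : StrictMonoOn G (Set.Ici (0:ℝ)))
    (hconc : StrictConcaveOn ℝ (Set.Ici (0:ℝ)) G)
    (hG0 : G 0 = 0)
    (hGpos : ∀ I > (0:ℝ), 0 < G I)
    (hGlim : Filter.Tendsto G Filter.atTop (nhds C))
    (hC : 0 ≤ C)
    -- expectations E(e^{-μT₁}), E(e^{-μT₂}), E(e^{-μT₃}), E(e^{-μ(T₁+T₂)})
    (E₁ E₂ E₃ E₁₂ : ℝ)
    (hE₁ : 0 < E₁ ∧ E₁ ≤ 1) (hE₂ : 0 < E₂ ∧ E₂ ≤ 1)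
    (hE₃ : 0 < E₃ ∧ E₃ ≤ 1) (hE₁₂ : 0 < E₁₂ ∧ E₁₂ ≤ 1)
    (H : ℝ → ℝ)
    (hH : ∀ I > (0:ℝ),
      H I = B - (1 / E₁₂) * I *
        ((μ + d + α) * μ / (β * G I) + (μ + d) * E₁ +
          α * E₁ * (1 - E₂ * E₃)))
    (L : ℝ)
    (hHlim : Filter.Tendsto H (nhdsWithin 0 (Set.Ioi 0)) (nhds L))
    (hL : 0 < L) :
    ∃! Istar : ℝ, 0 < Istar ∧ H Istar = 0 :=
  endemic_equilibrium_unique_root_general B μ β d α hμ hβ hd hα G hconc hG0 hGpos E₁ E₂ E₃ E₁₂ hE₁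
    hE₂ hE₃ hE₁₂ H hH L hHlim hL
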